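/- Let H = -Δ + V be a Schrödinger operator on ℝ^d with domain contained in H¹(ℝ^d), let u, v be eigenfunctions with eigenvalues λ_u, λ_v, and let η ∈ C_c^∞(ℝ^d). Then ⟨H(ηu), ηv⟩_{L²} = ⟨u, ((λ_u+λ_v)/2 · η² + |∇η|²) v⟩_{L²}. -/

import Mathlib

open MeasureTheory Set Filter Topology
open scoped RealInnerProductSpace

noncomputable section

/-- The Laplacian on Euclidean space. -/
def lap {d : ℕ} (f : EuclideanSpace ℝ (Fin d) → ℝ) (x : EuclideanSpace ℝ (Fin d)) : ℝ :=
  ∑ i : Fin d,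
    fderiv ℝ (fun y => fderiv ℝ f y (EuclideanSpace.single i (1 : ℝ))) x
      (EuclideanSpace.single i (1 : ℝ))

namespace SchroAux

variable {d : ℕ}

/-- i-th partial derivative. -/
def pd (f : EuclideanSpace ℝ (Fin d) → ℝ) (i : Fin d) (x : EuclideanSpace ℝ (Fin d)) : ℝ :=
  fderiv ℝ f x (EuclideanSpace.single i (1 : ℝ))

lemma lap_eq (f : EuclideanSpace ℝ (Fin d) → ℝ) (x : EuclideanSpace ℝ (Fin d)) :
    lap f x = ∑ i : Fin d, pd (pd f i) i x := rfl

lemma pd_contDiff {f : EuclideanSpace ℝ (Fin d) → ℝ} (hf : ContDiff ℝ (⊤ : ℕ∞) f) (i : Fin d) :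
    ContDiff ℝ (⊤ : ℕ∞) (pd f i) :=
  (hf.fderiv_right (m := (⊤ : ℕ∞)) (by simp)).clm_apply contDiff_const

lemma pd_hasCompactSupport {f : EuclideanSpace ℝ (Fin d) → ℝ} (hf : HasCompactSupport f)
    (i : Fin d) : HasCompactSupport (pd f i) :=
  hf.fderiv_apply ℝ _

lemma pd_mul {f g : EuclideanSpace ℝ (Fin d) → ℝ} {x} (hf : DifferentiableAt ℝ f x)
    (hg : DifferentiableAt ℝ g x) (i : Fin d) :
    pd (fun y => f y * g y) i x = pd f i x * g x + f x * pd g i x := by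
  unfold pd; rw [fderiv_fun_mul hf hg]; simp; ring

lemma pd_add {f g : EuclideanSpace ℝ (Fin d) → ℝ} {x} (hf : DifferentiableAt ℝ f x)
    (hg : DifferentiableAt ℝ g x) (i : Fin d) :
    pd (fun y => f y + g y) i x = pd f i x + pd g i x := by
  unfold pd; rw [fderiv_fun_add hf hg]; simp

lemma pd_sub {f g : EuclideanSpace ℝ (Fin d) → ℝ} {x} (hf : DifferentiableAt ℝ f x)
    (hg : DifferentiableAt ℝ g x) (i : Fin d) :
    pd (fun y => f y - g y) i x = pd f i x - pd g i x := by
  unfold pd; rw [fderiv_fun_sub hf hg]; simp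

lemma pd_const_mul {f : EuclideanSpace ℝ (Fin d) → ℝ} {x} (hf : DifferentiableAt ℝ f x)
    (c : ℝ) (i : Fin d) :
    pd (fun y => c * f y) i x = c * pd f i x := by
  unfold pd; rw [fderiv_const_mul hf]; simp

lemma grad_sq (f : EuclideanSpace ℝ (Fin d) → ℝ) (x : EuclideanSpace ℝ (Fin d)) :
    ‖gradient f x‖ ^ 2 = ∑ i : Fin d, (pd f i x) ^ 2 := by
  have h : ∀ i : Fin d, gradient f x i = pd f i x := by
    intro i
    have : ⟪gradient f x, EuclideanSpace.single i (1:ℝ)⟫ = pd f i x := by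
      rw [gradient, InnerProductSpace.toDual_symm_apply]
      rfl
    rw [← this, real_inner_comm, EuclideanSpace.inner_single_left]
    simp
  rw [EuclideanSpace.norm_eq, Real.sq_sqrt (by positivity)]
  exact Finset.sum_congr rfl fun i _ => by rw [h i]; simp [sq]

lemma integral_pd_eq_zero {f : EuclideanSpace ℝ (Fin d) → ℝ} (hf : ContDiff ℝ (⊤ : ℕ∞) f)
    (hfc : HasCompactSupport f) (i : Fin d) : ∫ x, pd f i x = 0 := by
  have h := integral_mul_fderiv_eq_neg_fderiv_mul_of_integrable (μ := volume)
    (f := fun _ : EuclideanSpace ℝ (Fin d) => (1:ℝ)) (g := f)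
    (v := EuclideanSpace.single i (1:ℝ)) ?_ ?_ ?_ (fun x _ => differentiableAt_const _)
    (fun x _ => hf.differentiable (by simp) x)
  · simpa [pd] using h
  · simp
  · simp
    exact ((pd_contDiff hf i).continuous).integrable_of_hasCompactSupport (pd_hasCompactSupport hfc i)
  · simpa using (hf.continuous).integrable_of_hasCompactSupport hfc

variable {η u v : EuclideanSpace ℝ (Fin d) → ℝ}

/-- second-derivative Leibniz, coordinatewise -/
lemma pd_pd_mul (hu : ContDiff ℝ (⊤ : ℕ∞) u) (hv : ContDiff ℝ (⊤ : ℕ∞) v) (i : Fin d)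
    (x : EuclideanSpace ℝ (Fin d)) :
    pd (pd (fun y => u y * v y) i) i x
      = pd (pd u i) i x * v x + 2 * (pd u i x * pd v i x) + u x * pd (pd v i) i x := by
  have Du : ∀ y, DifferentiableAt ℝ u y := fun y => (hu.differentiable (by simp)) y
  have Dv : ∀ y, DifferentiableAt ℝ v y := fun y => (hv.differentiable (by simp)) y
  have Dpu : ∀ y, DifferentiableAt ℝ (pd u i) y :=
    fun y => ((pd_contDiff hu i).differentiable (by simp)) y
  have Dpv : ∀ y, DifferentiableAt ℝ (pd v i) y :=
    fun y => ((pd_contDiff hv i).differentiable (by simp)) y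
  have h1 : pd (fun y => u y * v y) i = fun y => pd u i y * v y + u y * pd v i y :=
    funext fun y => pd_mul (Du y) (Dv y) i
  rw [h1]
  rw [pd_add ((Dpu x).fun_mul (Dv x)) ((Du x).fun_mul (Dpv x)) i,
    pd_mul (Dpu x) (Dv x) i, pd_mul (Du x) (Dpv x) i]
  ring

/-- Laplacian Leibniz rule -/
lemma lap_mul (hu : ContDiff ℝ (⊤ : ℕ∞) u) (hv : ContDiff ℝ (⊤ : ℕ∞) v) (x : EuclideanSpace ℝ (Fin d)) :
    lap (fun y => u y * v y) x
      = u x * lap v x + 2 * (∑ i : Fin d, pd u i x * pd v i x) + v x * lap u x := by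
  rw [lap_eq]
  rw [Finset.sum_congr rfl fun i _ => pd_pd_mul hu hv i x]
  simp only [Finset.sum_add_distrib, ← Finset.sum_mul, ← Finset.mul_sum]
  rw [lap_eq u x, lap_eq v x]
  ring

/-- the localization vector field, coordinatewise -/
def W (η u v : EuclideanSpace ℝ (Fin d) → ℝ) (i : Fin d)
    (y : EuclideanSpace ℝ (Fin d)) : ℝ :=
  η y * (η y * ((1/2) * (u y * pd v i y - v y * pd u i y)) - pd η i y * (u y * v y))

lemma W_contDiff (hη : ContDiff ℝ (⊤ : ℕ∞) η) (hu : ContDiff ℝ (⊤ : ℕ∞) u) (hv : ContDiff ℝ (⊤ : ℕ∞) v)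
    (i : Fin d) : ContDiff ℝ (⊤ : ℕ∞) (W η u v i) := by
  unfold W
  exact hη.mul ((hη.mul (contDiff_const.mul
    ((hu.mul (pd_contDiff hv i)).sub (hv.mul (pd_contDiff hu i))))).sub
    ((pd_contDiff hη i).mul (hu.mul hv)))

lemma W_hasCompactSupport (hηc : HasCompactSupport η) (i : Fin d) :
    HasCompactSupport (W η u v i) := by
  apply hηc.mono'
  intro x hx
  apply subset_closure
  intro h0
  apply hx
  simp only [W, Function.mem_support] at *
  simp [h0]

lemma pd_W (hη : ContDiff ℝ (⊤ : ℕ∞) η) (hu : ContDiff ℝ (⊤ : ℕ∞) u) (hv : ContDiff ℝ (⊤ : ℕ∞) v) (i : Fin d)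
    (x : EuclideanSpace ℝ (Fin d)) :
    pd (W η u v i) i x
      = -(2 * (η x * v x * (pd η i x * pd u i x)))
        + (1/2) * η x ^ 2 * (u x * pd (pd v i) i x - v x * pd (pd u i) i x)
        - pd η i x ^ 2 * (u x * v x) - η x * pd (pd η i) i x * (u x * v x) := by
  have Dη : ∀ y, DifferentiableAt ℝ η y := fun y => (hη.differentiable (by simp)) y
  have Du : ∀ y, DifferentiableAt ℝ u y := fun y => (hu.differentiable (by simp)) y
  have Dv : ∀ y, DifferentiableAt ℝ v y := fun y => (hv.differentiable (by simp)) y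
  have Dpη : ∀ y, DifferentiableAt ℝ (pd η i) y :=
    fun y => ((pd_contDiff hη i).differentiable (by simp)) y
  have Dpu : ∀ y, DifferentiableAt ℝ (pd u i) y :=
    fun y => ((pd_contDiff hu i).differentiable (by simp)) y
  have Dpv : ∀ y, DifferentiableAt ℝ (pd v i) y :=
    fun y => ((pd_contDiff hv i).differentiable (by simp)) y
  have DS : ∀ y, DifferentiableAt ℝ (fun y => u y * pd v i y - v y * pd u i y) y :=
    fun y => ((Du y).mul (Dpv y)).sub ((Dv y).mul (Dpu y))
  have DB : ∀ y, DifferentiableAt ℝ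
      (fun y => (1/2 : ℝ) * (u y * pd v i y - v y * pd u i y)) y :=
    fun y => (differentiableAt_const _).mul (DS y)
  have DC : ∀ y, DifferentiableAt ℝ (fun y => u y * v y) y := fun y => (Du y).mul (Dv y)
  have DA : ∀ y, DifferentiableAt ℝ
      (fun y => η y * ((1/2 : ℝ) * (u y * pd v i y - v y * pd u i y))
        - pd η i y * (u y * v y)) y :=
    fun y => ((Dη y).mul (DB y)).sub ((Dpη y).mul (DC y))
  have hS : pd (fun y => u y * pd v i y - v y * pd u i y) i x
      = (pd u i x * pd v i x + u x * pd (pd v i) i x)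
        - (pd v i x * pd u i x + v x * pd (pd u i) i x) := by
    rw [pd_sub ((Du x).fun_mul (Dpv x)) ((Dv x).fun_mul (Dpu x)) i,
      pd_mul (Du x) (Dpv x) i, pd_mul (Dv x) (Dpu x) i]
  have hC : pd (fun y => u y * v y) i x = pd u i x * v x + u x * pd v i x :=
    pd_mul (Du x) (Dv x) i
  have hA : pd (fun y => η y * ((1/2 : ℝ) * (u y * pd v i y - v y * pd u i y))
      - pd η i y * (u y * v y)) i x
      = (pd η i x * ((1/2) * (u x * pd v i x - v x * pd u i x))
          + η x * ((1/2) * ((pd u i x * pd v i x + u x * pd (pd v i) i x)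
            - (pd v i x * pd u i x + v x * pd (pd u i) i x))))
        - (pd (pd η i) i x * (u x * v x) + pd η i x * (pd u i x * v x + u x * pd v i x)) := by
    rw [pd_sub ((Dη x).fun_mul (DB x)) ((Dpη x).fun_mul (DC x)) i,
      pd_mul (Dη x) (DB x) i, pd_mul (Dpη x) (DC x) i,
      pd_const_mul (DS x) (1/2) i, hS, hC]
  unfold W
  rw [pd_mul (Dη x) (DA x) i, hA]
  ring

lemma sum_pd_W (hη : ContDiff ℝ (⊤ : ℕ∞) η) (hu : ContDiff ℝ (⊤ : ℕ∞) u) (hv : ContDiff ℝ (⊤ : ℕ∞) v)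
    (x : EuclideanSpace ℝ (Fin d)) :
    ∑ i : Fin d, pd (W η u v i) i x
      = -(2 * η x * v x) * (∑ i : Fin d, pd η i x * pd u i x)
        + (η x ^ 2 * u x / 2) * lap v x - (η x ^ 2 * v x / 2) * lap u x
        - (u x * v x) * (∑ i : Fin d, pd η i x ^ 2) - (η x * u x * v x) * lap η x := by
  have step : ∀ i : Fin d, pd (W η u v i) i x
      = (-(2 * η x * v x)) * (pd η i x * pd u i x)
        + (η x ^ 2 * u x / 2) * pd (pd v i) i x
        + (-(η x ^ 2 * v x / 2)) * pd (pd u i) i x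
        + (-(u x * v x)) * (pd η i x ^ 2)
        + (-(η x * u x * v x)) * pd (pd η i) i x := by
    intro i
    rw [pd_W hη hu hv i x]
    ring
  rw [Finset.sum_congr rfl fun i _ => step i]
  simp only [Finset.sum_add_distrib, ← Finset.mul_sum]
  rw [lap_eq u x, lap_eq v x, lap_eq η x]
  ring

end SchroAux

open SchroAux in
/-- IMS-type localization identity: for a Schrödinger operator `H = -Δ + V`,
eigenfunctions `u, v` with eigenvalues `λ_u, λ_v`, and `η ∈ C_c^∞(ℝ^d)`,
`⟨H(ηu), ηv⟩ = ⟨u, ((λ_u+λ_v)/2 η² + |∇η|²) v⟩`. -/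
theorem schrodinger_localization_identity
    (d : ℕ) (V : EuclideanSpace ℝ (Fin d) → ℝ) (hV : ContDiff ℝ (⊤ : ℕ∞) V)
    (u v : EuclideanSpace ℝ (Fin d) → ℝ)
    (hu : ContDiff ℝ (⊤ : ℕ∞) u) (hv : ContDiff ℝ (⊤ : ℕ∞) v)
    (lu lv : ℝ)
    (hue : ∀ x, -(lap u x) + V x * u x = lu * u x)
    (hve : ∀ x, -(lap v x) + V x * v x = lv * v x)
    (η : EuclideanSpace ℝ (Fin d) → ℝ)
    (hη : ContDiff ℝ (⊤ : ℕ∞) η) (hηc : HasCompactSupport η) :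
    (∫ x, (-(lap (fun y => η y * u y) x) + V x * (η x * u x)) * (η x * v x)) =
      ∫ x, u x * (((lu + lv) / 2 * (η x) ^ 2 + ‖gradient η x‖ ^ 2) * v x) := by
  -- pointwise identity
  have key : ∀ x, (-(lap (fun y => η y * u y) x) + V x * (η x * u x)) * (η x * v x)
      = u x * (((lu + lv) / 2 * (η x) ^ 2 + ‖gradient η x‖ ^ 2) * v x)
        + ∑ i : Fin d, pd (W η u v i) i x := by
    intro x
    rw [lap_mul hη hu x, sum_pd_W hη hu hv x, grad_sq η x]
    linear_combination ((η x) ^ 2 * v x / 2) * hue x + ((η x) ^ 2 * u x / 2) * hve x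
  -- integrability of the right-hand side integrand
  have hgradc : Continuous fun x => ‖gradient η x‖ ^ 2 := by
    have h1 : Continuous (fderiv ℝ η) := hη.continuous_fderiv (by simp)
    exact (continuous_norm.comp
      (((InnerProductSpace.toDual ℝ (EuclideanSpace ℝ (Fin d))).symm.continuous).comp h1)).pow 2
  have hQcont : Continuous fun x => (lu + lv) / 2 * (η x) ^ 2 + ‖gradient η x‖ ^ 2 :=
    (continuous_const.mul (hη.continuous.pow 2)).add hgradc
  have hQc : HasCompactSupport fun x => (lu + lv) / 2 * (η x) ^ 2 + ‖gradient η x‖ ^ 2 := by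
    have h1 : HasCompactSupport fun x => (lu + lv) / 2 * (η x) ^ 2 :=
      hηc.comp_left (g := fun t : ℝ => (lu + lv) / 2 * t ^ 2) (by simp)
    have h2 : HasCompactSupport fun x => ‖gradient η x‖ ^ 2 :=
      (hηc.fderiv ℝ).comp_left
        (g := fun L : EuclideanSpace ℝ (Fin d) →L[ℝ] ℝ =>
          ‖(InnerProductSpace.toDual ℝ (EuclideanSpace ℝ (Fin d))).symm L‖ ^ 2) (by simp)
    exact h1.add h2
  have hRHSc : HasCompactSupport fun x =>
      u x * (((lu + lv) / 2 * (η x) ^ 2 + ‖gradient η x‖ ^ 2) * v x) := by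
    apply hQc.mono'
    intro x hx
    apply subset_closure
    intro h0
    apply hx
    simp only [Function.mem_support] at *
    simp [h0]
  have hRHSint : Integrable fun x =>
      u x * (((lu + lv) / 2 * (η x) ^ 2 + ‖gradient η x‖ ^ 2) * v x) :=
    (hu.continuous.mul (hQcont.mul hv.continuous)).integrable_of_hasCompactSupport hRHSc
  have hWint : ∀ i : Fin d, Integrable fun x => pd (W η u v i) i x := fun i =>
    ((pd_contDiff (W_contDiff hη hu hv i) i).continuous).integrable_of_hasCompactSupport
      (pd_hasCompactSupport (W_hasCompactSupport hηc i) i)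
  have hsumint : Integrable fun x => ∑ i : Fin d, pd (W η u v i) i x :=
    integrable_finset_sum _ fun i _ => hWint i
  rw [integral_congr_ae (Filter.Eventually.of_forall key),
    integral_add hRHSint hsumint]
  have h2 : (∫ x, ∑ i : Fin d, pd (W η u v i) i x) = 0 := by
    rw [integral_finset_sum _ fun i _ => hWint i]
    exact Finset.sum_eq_zero fun i _ =>
      integral_pd_eq_zero (W_contDiff hη hu hv i) (W_hasCompactSupport hηc i) i
  rw [h2, add_zero]
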